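/- Let ω(z) = c₁z + c₂z² + ⋯ be a Schwarz function. Then |c₃ - (2/19)c₁c₂ + c₁³| ≤ 1. -/

import Mathlib

/-!
Write `ω = z g`; by the Schwarz lemma `g` maps the disc into the closed disc, and its Taylor
coefficients are `c₁, c₂, c₃, …`. One step of the Schur algorithm, `(g - c₁) / (z (1 - c̄₁ g))`,
is again such a map, and the Schwarz–Pick inequality `|h'(0)| ≤ 1 - |h(0)|²` for it is Carlson's
inequality `|c₃ (1 - |c₁|²) + c̄₁ c₂²| ≤ (1 - |c₁|²)² - |c₂|²`. Solving this for `c₃`, the triangle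
inequality reduces the claim to `2 t (1 + t) s ≤ 19 (t² (1 - t²) + s²)` for `t = |c₁|` and
`s = |c₂| ≤ 1 - t²`. If `|c₁| = 1`, `g` is constant by the maximum principle and `c₂ = c₃ = 0`.
-/

open Complex Metric Set Filter Topology FormalMultilinearSeries ComplexConjugate

theorem hasFPowerSeriesOnBall_ofScalars_of_hasSum {f : ℂ → ℂ} {c : ℕ → ℂ} {r : NNReal}
    (hr : 0 < r) (hf : ∀ z ∈ ball (0 : ℂ) r, HasSum (fun n => c n * z ^ n) (f z)) :
    HasFPowerSeriesOnBall f (ofScalars ℂ c) 0 r := by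
  refine ⟨le_of_forall_lt_imp_le_of_dense fun ρ hρ => ?_, by simpa using hr, fun {y} hy => ?_⟩
  · lift ρ to NNReal using (hρ.trans_le le_top).ne
    refine le_radius_of_summable_norm _ ?_
    have hρ' : ((ρ : ℝ) : ℂ) ∈ ball (0 : ℂ) r := by simpa using hρ
    simpa [ofScalars_norm] using (hf _ hρ').summable.norm
  · have hy' : y ∈ ball (0 : ℂ) r := by simpa using hy
    simpa [ofScalars_apply_eq, mul_comm] using hf y hy'

theorem norm_sub_le_norm_one_sub_conj_mul {a w : ℂ} (ha : ‖a‖ < 1) (hw : ‖w‖ ≤ 1) :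
    ‖w - a‖ ≤ ‖1 - conj a * w‖ := by
  have key : normSq (1 - conj a * w) - normSq (w - a) = (1 - normSq a) * (1 - normSq w) := by
    simp only [normSq_apply, sub_re, sub_im, mul_re, mul_im, one_re, one_im, conj_re, conj_im]
    ring
  rw [normSq_eq_norm_sq a, normSq_eq_norm_sq w] at key
  have hpos : 0 ≤ (1 - ‖a‖ ^ 2) * (1 - ‖w‖ ^ 2) :=
    mul_nonneg (by nlinarith [norm_nonneg a]) (by nlinarith [norm_nonneg w])
  rw [← sq_le_sq₀ (norm_nonneg _) (norm_nonneg _), ← normSq_eq_norm_sq, ← normSq_eq_norm_sq]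
  linarith

theorem one_sub_conj_mul_ne_zero {a w : ℂ} (ha : ‖a‖ < 1) (hw : ‖w‖ ≤ 1) :
    1 - conj a * w ≠ 0 := by
  have : ‖conj a * w‖ < 1 := by
    rw [norm_mul, norm_conj]
    nlinarith [norm_nonneg a, norm_nonneg w]
  intro h
  rw [← sub_eq_zero.mp h, norm_one] at this
  exact this.false

theorem dslope_id_mul {g : ℂ → ℂ} (hg : DifferentiableAt ℂ g 0) :
    dslope (fun z => z * g z) 0 = g := by
  ext z
  rcases eq_or_ne z 0 with rfl | hz
  · have : HasDerivAt (fun z => z * g z) (1 * g 0 + 0 * deriv g 0) 0 :=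
      (hasDerivAt_id' 0).mul hg.hasDerivAt
    simpa using this.deriv
  · simpa using dslope_sub_smul_of_ne g hz

section UnitDiscSelfMap

variable {f : ℂ → ℂ} {p : FormalMultilinearSeries ℂ ℂ ℂ}

theorem eqOn_const_of_norm_eq_one (hf : DifferentiableOn ℂ f (ball 0 1))
    (hmaps : MapsTo f (ball 0 1) (closedBall 0 1)) (h1 : ‖f 0‖ = 1) :
    EqOn f (fun _ => f 0) (ball 0 1) :=
  eqOn_of_isPreconnected_of_isMaxOn_norm (convex_ball _ _).isPreconnected isOpen_ball hf
    (mem_ball_self one_pos) fun z hz => by simpa [h1] using hmaps hz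

theorem HasFPowerSeriesAt.coeff_eq_zero_of_norm_eq_one (hf : DifferentiableOn ℂ f (ball 0 1))
    (hmaps : MapsTo f (ball 0 1) (closedBall 0 1)) (hp : HasFPowerSeriesAt f p 0)
    (h1 : ‖f 0‖ = 1) {n : ℕ} (hn : n ≠ 0) : p.coeff n = 0 := by
  have hconst : f =ᶠ[𝓝 0] fun _ => f 0 :=
    (eqOn_const_of_norm_eq_one hf hmaps h1).eventuallyEq_of_mem (ball_mem_nhds 0 one_pos)
  rw [(hp.congr hconst).eq_formalMultilinearSeries hasFPowerSeriesAt_const]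
  simp [coeff, constFormalMultilinearSeries_apply_of_nonzero hn]

theorem mapsTo_dslope_zero (hf : DifferentiableOn ℂ f (ball 0 1))
    (hmaps : MapsTo f (ball 0 1) (closedBall 0 1)) (h0 : f 0 = 0) :
    MapsTo (dslope f 0) (ball 0 1) (closedBall 0 1) := fun z hz => by
  simpa using norm_dslope_le_div_of_mapsTo_ball hf (by rwa [h0]) hz

noncomputable def schurTransform (f : ℂ → ℂ) (z : ℂ) : ℂ :=
  dslope f 0 z / (1 - conj (f 0) * f z)

theorem id_mul_schurTransform (z : ℂ) :
    z * schurTransform f z = (f z - f 0) / (1 - conj (f 0) * f z) := by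
  rw [schurTransform, ← mul_div_assoc]
  simpa using congrArg (· / (1 - conj (f 0) * f z)) (sub_smul_dslope f 0 z)

theorem schurTransform_zero : schurTransform f 0 = deriv f 0 / ((1 - ‖f 0‖ ^ 2 : ℝ) : ℂ) := by
  rw [schurTransform, dslope_same, conj_mul']
  push_cast
  rfl

theorem differentiableOn_schurTransform (hf : DifferentiableOn ℂ f (ball 0 1))
    (hmaps : MapsTo f (ball 0 1) (closedBall 0 1)) (ha : ‖f 0‖ < 1) :
    DifferentiableOn ℂ (schurTransform f) (ball 0 1) :=
  ((differentiableOn_dslope (ball_mem_nhds 0 one_pos)).2 hf).div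
    ((differentiableOn_const 1).sub ((differentiableOn_const _).mul hf))
    fun z hz => one_sub_conj_mul_ne_zero ha (by simpa using hmaps hz)

theorem mapsTo_schurTransform (hf : DifferentiableOn ℂ f (ball 0 1))
    (hmaps : MapsTo f (ball 0 1) (closedBall 0 1)) (ha : ‖f 0‖ < 1) :
    MapsTo (schurTransform f) (ball 0 1) (closedBall 0 1) := by
  have hS := differentiableOn_schurTransform hf hmaps ha
  have hmob : MapsTo (fun z => z * schurTransform f z) (ball 0 1) (closedBall 0 1) := by
    intro z hz
    dsimp only
    rw [mem_closedBall_zero_iff, id_mul_schurTransform, norm_div]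
    exact div_le_one_of_le₀ (norm_sub_le_norm_one_sub_conj_mul ha (by simpa using hmaps hz))
      (norm_nonneg _)
  have hd : DifferentiableOn ℂ (fun z => z * schurTransform f z) (ball 0 1) :=
    differentiableOn_id.mul hS
  have := mapsTo_dslope_zero hd hmob (zero_mul _)
  rwa [dslope_id_mul (hS.differentiableAt (ball_mem_nhds 0 one_pos))] at this

theorem HasFPowerSeriesAt.hasDerivAt_schurTransform (hp : HasFPowerSeriesAt f p 0)
    (ha : ‖p.coeff 0‖ < 1) :
    HasDerivAt (schurTransform f)
      ((p.coeff 2 * ((1 - ‖p.coeff 0‖ ^ 2 : ℝ) : ℂ) + conj (p.coeff 0) * p.coeff 1 ^ 2) /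
        ((1 - ‖p.coeff 0‖ ^ 2 : ℝ) : ℂ) ^ 2) 0 := by
  have hf0 : f 0 = p.coeff 0 := (hp.coeff_zero 1).symm
  have hk : HasDerivAt (dslope f 0) (p.coeff 2) 0 := by
    simpa [coeff_fslope] using hp.has_fpower_series_dslope_fslope.hasDerivAt
  have hden : HasDerivAt (fun z => 1 - conj (f 0) * f z) (-(conj (f 0) * p.coeff 1)) 0 := by
    simpa using (hp.hasDerivAt.const_mul (conj (f 0))).const_sub 1
  have hD : 1 - conj (f 0) * f 0 ≠ 0 := one_sub_conj_mul_ne_zero (hf0 ▸ ha) (hf0 ▸ ha.le)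
  have hS : HasDerivAt (schurTransform f) _ 0 := hk.div hden hD
  have hf' : deriv f 0 = p.coeff 1 := hp.deriv
  rw [dslope_same, hf', hf0, conj_mul'] at hS
  rw [hf0, conj_mul'] at hD
  refine hS.congr_deriv ?_
  push_cast
  field_simp
  ring

theorem norm_deriv_le_one_sub_sq (hf : DifferentiableOn ℂ f (ball 0 1))
    (hmaps : MapsTo f (ball 0 1) (closedBall 0 1)) : ‖deriv f 0‖ ≤ 1 - ‖f 0‖ ^ 2 := by
  rcases (mem_closedBall_zero_iff.1 (hmaps (mem_ball_self one_pos))).lt_or_eq with ha | ha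
  · have hD : 0 < 1 - ‖f 0‖ ^ 2 := by nlinarith [norm_nonneg (f 0)]
    have := mem_closedBall_zero_iff.1 (mapsTo_schurTransform hf hmaps ha (mem_ball_self one_pos))
    rwa [schurTransform_zero, norm_div, norm_real, Real.norm_of_nonneg hD.le, div_le_one hD] at this
  · obtain ⟨p, hp⟩ := hf.analyticAt (ball_mem_nhds 0 one_pos)
    have hf' : deriv f 0 = p.coeff 1 := hp.deriv
    rw [hf', hp.coeff_eq_zero_of_norm_eq_one hf hmaps ha one_ne_zero, ha]
    norm_num

theorem HasFPowerSeriesAt.norm_coeff_two_mul_add_le (hf : DifferentiableOn ℂ f (ball 0 1))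
    (hmaps : MapsTo f (ball 0 1) (closedBall 0 1)) (hp : HasFPowerSeriesAt f p 0)
    (ha : ‖p.coeff 0‖ < 1) :
    ‖p.coeff 2 * ((1 - ‖p.coeff 0‖ ^ 2 : ℝ) : ℂ) + conj (p.coeff 0) * p.coeff 1 ^ 2‖ ≤
      (1 - ‖p.coeff 0‖ ^ 2) ^ 2 - ‖p.coeff 1‖ ^ 2 := by
  have hf0 : f 0 = p.coeff 0 := (hp.coeff_zero 1).symm
  have hf' : deriv f 0 = p.coeff 1 := hp.deriv
  have hD : 0 < 1 - ‖p.coeff 0‖ ^ 2 := by nlinarith [norm_nonneg (p.coeff 0)]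
  have := norm_deriv_le_one_sub_sq (differentiableOn_schurTransform hf hmaps (hf0 ▸ ha))
    (mapsTo_schurTransform hf hmaps (hf0 ▸ ha))
  rw [(hp.hasDerivAt_schurTransform ha).deriv, schurTransform_zero, hf', hf0, norm_div, norm_div,
    norm_pow, norm_real, Real.norm_of_nonneg hD.le, div_pow, div_le_iff₀ (by positivity), sub_mul,
    one_mul, div_mul_cancel₀ _ (by positivity)] at this
  exact this

end UnitDiscSelfMap

theorem two_mul_mul_le_nineteen_mul {t s : ℝ} (ht0 : 0 ≤ t) (hs0 : 0 ≤ s)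
    (hs : s ≤ 1 - t ^ 2) : 2 * t * (1 + t) * s ≤ 19 * (t ^ 2 * (1 - t ^ 2) + s ^ 2) := by
  -- for small `t` complete the square in `s`; for `t` near `1` the constraint makes `s` tiny
  rcases le_total t (19 / 20) with ht | ht
  · nlinarith [sq_nonneg (19 * s - t * (1 + t)), mul_nonneg (sq_nonneg t) (sub_nonneg.2 ht)]
  · nlinarith [mul_le_mul_of_nonneg_left hs (sq_nonneg t)]

theorem norm_sub_two_div_nineteen_mul_add_pow_le_one {a b e : ℂ} (ha : ‖a‖ < 1)
    (h : ‖e * ((1 - ‖a‖ ^ 2 : ℝ) : ℂ) + conj a * b ^ 2‖ ≤ (1 - ‖a‖ ^ 2) ^ 2 - ‖b‖ ^ 2) :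
    ‖e - 2 / 19 * a * b + a ^ 3‖ ≤ 1 := by
  set D : ℝ := 1 - ‖a‖ ^ 2
  have hD : 0 < D := by nlinarith [norm_nonneg a]
  have hbD : ‖b‖ ≤ D := by
    rw [← sq_le_sq₀ (norm_nonneg b) hD.le]
    linarith [norm_nonneg (e * (D : ℂ) + conj a * b ^ 2)]
  have hsplit : (e - 2 / 19 * a * b + a ^ 3) * D =
      (e * D + conj a * b ^ 2) - conj a * b ^ 2 - 2 / 19 * a * b * D + a ^ 3 * D := by ring
  have htri : ‖e - 2 / 19 * a * b + a ^ 3‖ * D ≤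
      ((1 - ‖a‖ ^ 2) ^ 2 - ‖b‖ ^ 2) + ‖a‖ * ‖b‖ ^ 2 + 2 / 19 * ‖a‖ * ‖b‖ * D + ‖a‖ ^ 3 * D := by
    calc ‖e - 2 / 19 * a * b + a ^ 3‖ * D
        = ‖(e * D + conj a * b ^ 2) - conj a * b ^ 2 - 2 / 19 * a * b * D + a ^ 3 * D‖ := by
          rw [← hsplit, norm_mul, norm_real, Real.norm_of_nonneg hD.le]
      _ ≤ ‖e * D + conj a * b ^ 2‖ + ‖conj a * b ^ 2‖ + ‖2 / 19 * a * b * D‖ + ‖a ^ 3 * D‖ := by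
          refine (norm_add_le _ _).trans ?_
          gcongr
          refine (norm_sub_le _ _).trans ?_
          gcongr
          exact norm_sub_le _ _
      _ = ‖e * D + conj a * b ^ 2‖ + ‖a‖ * ‖b‖ ^ 2 + 2 / 19 * ‖a‖ * ‖b‖ * D + ‖a‖ ^ 3 * D := by
          simp [Real.norm_of_nonneg hD.le]
      _ ≤ _ := by gcongr
  have key := two_mul_mul_le_nineteen_mul (norm_nonneg a) (norm_nonneg b) hbD
  have : ‖e - 2 / 19 * a * b + a ^ 3‖ * D ≤ 1 * D := by
    nlinarith [mul_le_mul_of_nonneg_left key (sub_nonneg.2 ha.le)]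
  exact le_of_mul_le_mul_right this hD

theorem schwarz_coeff_bound_1 (ω : ℂ → ℂ) (c : ℕ → ℂ)
    (hc0 : c 0 = 0)
    (hsum : ∀ z ∈ ball (0 : ℂ) 1, HasSum (fun n => c n * z ^ n) (ω z))
    (hω : ∀ z ∈ ball (0 : ℂ) 1, ‖ω z‖ < 1) :
    ‖c 3 - (2/19) * c 1 * c 2 + c 1 ^ 3‖ ≤ 1 := by
  have hps : HasFPowerSeriesOnBall ω (ofScalars ℂ c) 0 1 :=
    hasFPowerSeriesOnBall_ofScalars_of_hasSum one_pos (by simpa using hsum)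
  have hω0 : ω 0 = 0 := by simpa [hc0] using (hps.coeff_zero 1).symm
  have hωd : DifferentiableOn ℂ ω (ball 0 1) := by
    simpa only [← ENNReal.coe_one, eball_coe, NNReal.coe_one] using hps.differentiableOn
  have hωmaps : MapsTo ω (ball 0 1) (closedBall 0 1) := fun z hz =>
    mem_closedBall_zero_iff.2 (hω z hz).le
  have hgd : DifferentiableOn ℂ (dslope ω 0) (ball 0 1) :=
    (differentiableOn_dslope (ball_mem_nhds 0 one_pos)).2 hωd
  have hgmaps := mapsTo_dslope_zero hωd hωmaps hω0
  have hgp : HasFPowerSeriesAt (dslope ω 0) (ofScalars ℂ c).fslope 0 :=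
    hps.hasFPowerSeriesAt.has_fpower_series_dslope_fslope
  have hcoeff (n : ℕ) : (ofScalars ℂ c).fslope.coeff n = c (n + 1) := by simp [coeff_fslope]
  have hg0 : dslope ω 0 0 = c 1 := by simpa [hcoeff] using (hgp.coeff_zero 1).symm
  rcases (mem_closedBall_zero_iff.1 (hgmaps (mem_ball_self one_pos))).lt_or_eq with h1 | h1
  · rw [hg0] at h1
    have := hgp.norm_coeff_two_mul_add_le hgd hgmaps (by simpa [hcoeff] using h1)
    simp only [hcoeff] at this
    exact norm_sub_two_div_nineteen_mul_add_pow_le_one h1 this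
  · have hvanish {n : ℕ} (hn : n ≠ 0) : c (n + 1) = 0 := by
      rw [← hcoeff]
      exact hgp.coeff_eq_zero_of_norm_eq_one hgd hgmaps h1 hn
    rw [hg0] at h1
    simp [hvanish (n := 1) one_ne_zero, hvanish (n := 2) two_ne_zero, h1]
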